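/- arXiv:2204.08616 — 7 statements merged into one kernel-verified Lean document; each statement's English description precedes it below -/
import Mathlib

section
/- Let F : ℝⁿ → ℝᵐ be continuously differentiable. Then θ(x) ≤ 0 for every x ∈ ℝⁿ, and x is Pareto critical if and only if θ(x) = 0. -/
/-!
`φ` is positively homogeneous of degree one in its max-term and quadratic in its norm-term:
`φ(t d) = t · max_i ⟨∇F_i(x), d⟩ + t² ‖d‖²/2` for `t ≥ 0`. Hence `θ(x) ≤ φ(0) = 0`; if `x` is
Pareto critical the max-term is nonnegative everywhere, so `φ ≥ 0` and `θ(x) = 0`; and a descent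
direction `d` makes `φ(t d) < 0` for small `t > 0`, so `θ(x) < 0`.
-/

open scoped RealInnerProductSpace

/-- `φ_g(d) = max_{1 ≤ i ≤ m} ⟨g_i, d⟩ + ‖d‖²/2`. -/
noncomputable def phi {n m : ℕ} (g : Fin m → EuclideanSpace ℝ (Fin n))
    (d : EuclideanSpace ℝ (Fin n)) : ℝ :=
  (⨆ i, ⟪g i, d⟫) + ‖d‖ ^ 2 / 2

/-- `x` is Pareto critical: no direction `d` with `⟨∇F_i(x), d⟩ < 0` for all `i`. -/
def ParetoCritical {n m : ℕ} (F : Fin m → EuclideanSpace ℝ (Fin n) → ℝ)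
    (x : EuclideanSpace ℝ (Fin n)) : Prop :=
  ¬ ∃ d : EuclideanSpace ℝ (Fin n), ∀ i, ⟪gradient (F i) x, d⟫ < 0

/-- `θ(x) = min_d [max_i ⟨∇F_i(x), d⟩ + ‖d‖²/2]`. -/
noncomputable def theta {n m : ℕ} (F : Fin m → EuclideanSpace ℝ (Fin n) → ℝ)
    (x : EuclideanSpace ℝ (Fin n)) : ℝ :=
  ⨅ d : EuclideanSpace ℝ (Fin n), phi (fun i => gradient (F i) x) d

section Phi

variable {n m : ℕ} (g : Fin m → EuclideanSpace ℝ (Fin n))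

theorem phi_zero : phi g 0 = 0 := by
  simp [phi]

theorem iSup_inner_le_phi (d : EuclideanSpace ℝ (Fin n)) : ⨆ i, ⟪g i, d⟫ ≤ phi g d :=
  le_add_of_nonneg_right (by positivity)

theorem phi_smul {t : ℝ} (ht : 0 ≤ t) (d : EuclideanSpace ℝ (Fin n)) :
    phi g (t • d) = t * (⨆ i, ⟪g i, d⟫) + t ^ 2 * (‖d‖ ^ 2 / 2) := by
  simp only [phi, real_inner_smul_right, Real.mul_iSup_of_nonneg ht, norm_smul, mul_pow,
    Real.norm_eq_abs, sq_abs]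
  ring

theorem inner_le_iSup_inner (i : Fin m) (d : EuclideanSpace ℝ (Fin n)) :
    ⟪g i, d⟫ ≤ ⨆ j, ⟪g j, d⟫ :=
  le_ciSup (f := fun j => ⟪g j, d⟫) (Set.finite_range _).bddAbove i

theorem neg_norm_sq_div_two_le_phi (i : Fin m) (d : EuclideanSpace ℝ (Fin n)) :
    -(‖g i‖ ^ 2 / 2) ≤ phi g d := by
  have h_le_iSup := inner_le_iSup_inner g i d
  have h_cauchy_schwarz : -(‖g i‖ * ‖d‖) ≤ ⟪g i, d⟫ :=
    neg_le_of_abs_le (abs_real_inner_le_norm _ _)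
  unfold phi
  nlinarith [sq_nonneg (‖d‖ - ‖g i‖)]

theorem bddBelow_range_phi [Nonempty (Fin m)] : BddBelow (Set.range (phi g)) :=
  let i : Fin m := Classical.arbitrary _
  ⟨_, Set.forall_mem_range.2 (neg_norm_sq_div_two_le_phi g i)⟩

theorem exists_phi_neg_of_iSup_inner_neg {d : EuclideanSpace ℝ (Fin n)}
    (hd : ⨆ i, ⟪g i, d⟫ < 0) : ∃ d', phi g d' < 0 := by
  set s := ⨆ i, ⟪g i, d⟫
  have hd_ne : d ≠ 0 := by
    rintro rfl
    simp [s] at hd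
  have hd_norm : 0 < ‖d‖ ^ 2 := by positivity
  -- `t = -s / ‖d‖²` minimises `t s + t² ‖d‖²/2`, with value `-s² / (2‖d‖²)`.
  refine ⟨(-s / ‖d‖ ^ 2) • d, ?_⟩
  rw [phi_smul g (div_nonneg (neg_nonneg.2 hd.le) hd_norm.le)]
  have h_value : -s / ‖d‖ ^ 2 * s + (-s / ‖d‖ ^ 2) ^ 2 * (‖d‖ ^ 2 / 2)
      = -(s ^ 2 / (2 * ‖d‖ ^ 2)) := by
    field_simp
    ring
  rw [h_value, neg_neg_iff_pos]
  exact div_pos (sq_pos_of_neg hd) (by positivity)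

end Phi

section Theta

variable {n m : ℕ} [Nonempty (Fin m)] (F : Fin m → EuclideanSpace ℝ (Fin n) → ℝ)
  (x : EuclideanSpace ℝ (Fin n))

theorem theta_le_zero : theta F x ≤ 0 :=
  (ciInf_le (bddBelow_range_phi _) 0).trans_eq (phi_zero _)

theorem theta_eq_zero_iff :
    theta F x = 0 ↔ ∀ d, 0 ≤ phi (fun i => gradient (F i) x) d :=
  ⟨fun h d => h ▸ ciInf_le (bddBelow_range_phi _) d,
    fun h => (theta_le_zero F x).antisymm (le_ciInf h)⟩

theorem paretoCritical_iff_forall_iSup_inner_nonneg :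
    ParetoCritical F x ↔ ∀ d, 0 ≤ ⨆ i, ⟪gradient (F i) x, d⟫ := by
  simp only [ParetoCritical, not_exists, ← not_lt]
  refine forall_congr' fun d =>
    not_congr ⟨fun h => ?_, fun h i => (inner_le_iSup_inner _ i d).trans_lt h⟩
  obtain ⟨i, hi⟩ := exists_eq_ciSup_of_finite (f := fun i => ⟪gradient (F i) x, d⟫)
  exact hi ▸ h i

end Theta

theorem stmt_1_general {n m : ℕ} (hm : 0 < m) (F : Fin m → EuclideanSpace ℝ (Fin n) → ℝ)
    (x : EuclideanSpace ℝ (Fin n)) :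
    theta F x ≤ 0 ∧ (ParetoCritical F x ↔ theta F x = 0) := by
  have : Nonempty (Fin m) := ⟨⟨0, hm⟩⟩
  refine ⟨theta_le_zero F x, ?_⟩
  rw [paretoCritical_iff_forall_iSup_inner_nonneg, theta_eq_zero_iff]
  constructor
  · exact fun h d => (h d).trans (iSup_inner_le_phi _ d)
  · intro h d
    by_contra! hd
    obtain ⟨d', hd'⟩ := exists_phi_neg_of_iSup_inner_neg _ hd
    exact (h d').not_gt hd'

theorem stmt_1 {n m : ℕ} (hm : 0 < m) (F : Fin m → EuclideanSpace ℝ (Fin n) → ℝ)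
    (hF : ∀ i, ContDiff ℝ 1 (F i)) (x : EuclideanSpace ℝ (Fin n)) :
    theta F x ≤ 0 ∧ (ParetoCritical F x ↔ theta F x = 0) :=
  stmt_1_general hm F x
end

section
/- Let F : ℝⁿ → ℝᵐ be continuously differentiable. Then x is Pareto critical if and only if d(x) = 0, where d(x) is the steepest descent direction at x. -/
/-!
Write `φ(d) = maxᵢ ⟪gᵢ, d⟫ + ‖d‖²/2`, so that `φ(0) = 0` and `d(x)` minimizes `φ`.
If `d(x) ≠ 0`, then `φ(d(x)) ≤ 0` forces `⟪gᵢ, d(x)⟫ ≤ -‖d(x)‖²/2 < 0` for every `i`.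
Conversely, if `⟪gᵢ, d⟫ < 0` for all `i`, then `M = maxᵢ ⟪gᵢ, d⟫ < 0` and
`φ(t d) = t M + t² ‖d‖²/2` is negative for small `t > 0`, so `0` is not a minimizer.
-/

open scoped RealInnerProductSpace

theorem phi_zero_s2 {n m : ℕ} (g : Fin m → EuclideanSpace ℝ (Fin n)) : phi g 0 = 0 := by
  simp [phi]

section SteepestDescent

variable {ι E : Type*} [NormedAddCommGroup E] [InnerProductSpace ℝ E] (g : ι → E)

theorem iSup_inner_smul {t : ℝ} (ht : 0 ≤ t) (d : E) :
    ⨆ i, ⟪g i, t • d⟫ = t * ⨆ i, ⟪g i, d⟫ := by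
  simp only [real_inner_smul_right, Real.mul_iSup_of_nonneg ht]

theorem forall_inner_neg_of_iSup_inner_add_sq_norm_nonpos [Finite ι] {d : E} (hd : d ≠ 0)
    (h : (⨆ i, ⟪g i, d⟫) + ‖d‖ ^ 2 / 2 ≤ 0) (i : ι) : ⟪g i, d⟫ < 0 := by
  have hle : ⟪g i, d⟫ ≤ ⨆ i, ⟪g i, d⟫ :=
    le_ciSup (Set.finite_range fun i => ⟪g i, d⟫).bddAbove i
  have hpos : 0 < ‖d‖ ^ 2 := by positivity
  linarith

theorem exists_iSup_inner_add_sq_norm_neg [Finite ι] [Nonempty ι] {d : E}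
    (hd : ∀ i, ⟪g i, d⟫ < 0) : ∃ d' : E, (⨆ i, ⟪g i, d'⟫) + ‖d'‖ ^ 2 / 2 < 0 := by
  obtain ⟨i₀, hi₀⟩ := exists_eq_ciSup_of_finite (f := fun i => ⟪g i, d⟫)
  set M := ⨆ i, ⟪g i, d⟫
  have hM : M < 0 := hi₀ ▸ hd i₀
  have hd₀ : 0 < ‖d‖ ^ 2 := by
    have : d ≠ 0 := by rintro rfl; simpa using hd i₀
    positivity
  -- `t = -M / ‖d‖²` minimizes `t M + t² ‖d‖² / 2`, with value `-M² / (2 ‖d‖²)`.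
  set t := -M / ‖d‖ ^ 2
  have ht : 0 < t := div_pos (neg_pos.mpr hM) hd₀
  refine ⟨t • d, ?_⟩
  have hval : t * M + t ^ 2 * ‖d‖ ^ 2 / 2 = -(M ^ 2 / ‖d‖ ^ 2) / 2 := by
    simp only [t]; field_simp; ring
  rw [iSup_inner_smul g ht.le, norm_smul, Real.norm_of_nonneg ht.le, mul_pow]
  change t * M + t ^ 2 * ‖d‖ ^ 2 / 2 < 0
  rw [hval]
  have : 0 < M ^ 2 / ‖d‖ ^ 2 := div_pos (sq_pos_of_neg hM) hd₀
  linarith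

end SteepestDescent

theorem stmt_2_general {n m : ℕ} (hm : 0 < m) (F : Fin m → EuclideanSpace ℝ (Fin n) → ℝ)
    (x : EuclideanSpace ℝ (Fin n))
    (dx : EuclideanSpace ℝ (Fin n))
    (hdx : ∀ d' : EuclideanSpace ℝ (Fin n),
      phi (fun i => gradient (F i) x) dx ≤ phi (fun i => gradient (F i) x) d') :
    ParetoCritical F x ↔ dx = 0 := by
  have : Nonempty (Fin m) := ⟨⟨0, hm⟩⟩
  have hnonpos : phi (fun i => gradient (F i) x) dx ≤ 0 := (hdx 0).trans_eq (phi_zero_s2 _)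
  constructor
  · intro hcrit
    by_contra hdx₀
    exact hcrit ⟨dx, forall_inner_neg_of_iSup_inner_add_sq_norm_nonpos _ hdx₀ hnonpos⟩
  · rintro rfl ⟨d, hd⟩
    obtain ⟨d', hd'⟩ := exists_iSup_inner_add_sq_norm_neg _ hd
    exact hd'.not_ge (phi_zero_s2 _ ▸ hdx d')

theorem stmt_2 {n m : ℕ} (hm : 0 < m) (F : Fin m → EuclideanSpace ℝ (Fin n) → ℝ)
    (hF : ∀ i, ContDiff ℝ 1 (F i)) (x : EuclideanSpace ℝ (Fin n))
    (dx : EuclideanSpace ℝ (Fin n))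
    (hdx : ∀ d' : EuclideanSpace ℝ (Fin n),
      phi (fun i => gradient (F i) x) dx ≤ phi (fun i => gradient (F i) x) d') :
    ParetoCritical F x ↔ dx = 0 :=
  stmt_2_general hm F x dx hdx
end

section
/- For any vectors g_1, …, g_m in ℝⁿ, one has min_{d∈ℝⁿ} [max_{1≤i≤m} ⟨g_i, d⟩ + (1/2)‖d‖²] = −(1/2) · min_{λ∈Δ_m} ‖Σ_{i=1}^m λ_i g_i‖². -/
/-!
Let `v = ∑ μ i • g i` be the point of minimal norm in the convex hull of the `g i`. The
variational inequality of the projection of `0` onto this hull gives `‖v‖² ≤ ⟪v, g i⟫` for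
every `i`, so `φ(-v) ≤ -‖v‖²/2`. Conversely, `max_i ⟪g i, d⟫ ≥ ⟪v, d⟫` because `v` is a convex
combination of the `g i`, and `⟪v, d⟫ + ‖d‖²/2 ≥ -‖v‖²/2` is `‖v + d‖² ≥ 0`.
-/

open scoped RealInnerProductSpace

section MinimalNorm

variable {E : Type*} [NormedAddCommGroup E] [InnerProductSpace ℝ E]

theorem exists_mem_forall_norm_sq_le_inner {K : Set E} (hne : K.Nonempty) (hc : IsComplete K)
    (hK : Convex ℝ K) : ∃ v ∈ K, ∀ w ∈ K, ‖v‖ ^ 2 ≤ ⟪v, w⟫ := by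
  obtain ⟨v, hvK, hv⟩ := exists_norm_eq_iInf_of_complete_convex hne hc hK 0
  refine ⟨v, hvK, fun w hw => ?_⟩
  have := (norm_eq_iInf_iff_real_inner_le_zero hK hvK).1 hv w hw
  rw [zero_sub, inner_neg_left, inner_sub_right, real_inner_self_eq_norm_sq] at this
  linarith

theorem norm_le_of_norm_sq_le_inner {v w : E} (h : ‖v‖ ^ 2 ≤ ⟪v, w⟫) : ‖v‖ ≤ ‖w‖ := by
  nlinarith [real_inner_le_norm v w, norm_nonneg v, norm_nonneg w]

end MinimalNorm

section Simplex

variable {ι : Type*} [Fintype ι]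

theorem sum_mul_le_iSup_of_mem_stdSimplex {μ : ι → ℝ} (hμ : μ ∈ stdSimplex ℝ ι) (a : ι → ℝ) :
    ∑ i, μ i * a i ≤ ⨆ i, a i :=
  calc ∑ i, μ i * a i ≤ ∑ i, μ i * ⨆ j, a j := by
        gcongr with i
        · exact hμ.1 i
        · exact le_ciSup (Set.finite_range a).bddAbove i
    _ = ⨆ j, a j := by rw [← Finset.sum_mul, hμ.2, one_mul]

variable {E : Type*} [NormedAddCommGroup E] [InnerProductSpace ℝ E] (g : ι → E)

theorem exists_mem_stdSimplex_isMinOn_norm_sq [Nonempty ι] :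
    ∃ μ ∈ stdSimplex ℝ ι, (∀ i, ‖∑ j, μ j • g j‖ ^ 2 ≤ ⟪∑ j, μ j • g j, g i⟫) ∧
      IsMinOn (fun ν : ι → ℝ => ‖∑ j, ν j • g j‖ ^ 2) (stdSimplex ℝ ι) μ := by
  classical
  set L := Fintype.linearCombination ℝ g
  have hg : ∀ i, g i ∈ L '' stdSimplex ℝ ι := fun i =>
    ⟨_, single_mem_stdSimplex ℝ i, by rw [Fintype.linearCombination_apply_single, one_smul]⟩
  obtain ⟨_, ⟨μ, hμ, rfl⟩, hmin⟩ := exists_mem_forall_norm_sq_le_inner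
    ⟨_, hg (Classical.arbitrary ι)⟩
    ((isCompact_stdSimplex ℝ ι).image (LinearMap.continuous_on_pi L)).isComplete
    ((convex_stdSimplex ℝ ι).linear_image L)
  refine ⟨μ, hμ, fun i => hmin _ (hg i), fun ν hν => ?_⟩
  exact pow_le_pow_left₀ (norm_nonneg _)
    (norm_le_of_norm_sq_le_inner (hmin _ (Set.mem_image_of_mem L hν))) 2

theorem iInf_iSup_inner_add_norm_sq_div_two [Nonempty ι] {μ : ι → ℝ} (hμ : μ ∈ stdSimplex ℝ ι)
    (hv : ∀ i, ‖∑ j, μ j • g j‖ ^ 2 ≤ ⟪∑ j, μ j • g j, g i⟫) :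
    ⨅ d : E, (⨆ i, ⟪g i, d⟫) + ‖d‖ ^ 2 / 2 = -(1 / 2) * ‖∑ j, μ j • g j‖ ^ 2 := by
  set v := ∑ j, μ j • g j
  have hlow : ∀ d, -(1 / 2) * ‖v‖ ^ 2 ≤ (⨆ i, ⟪g i, d⟫) + ‖d‖ ^ 2 / 2 := fun d => by
    have hvd : ⟪v, d⟫ ≤ ⨆ i, ⟪g i, d⟫ := by
      simpa only [v, sum_inner, real_inner_smul_left] using
        sum_mul_le_iSup_of_mem_stdSimplex hμ fun i => ⟪g i, d⟫
    nlinarith [norm_add_sq_real v d, sq_nonneg ‖v + d‖]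
  have hval : (⨆ i, ⟪g i, -v⟫) ≤ -‖v‖ ^ 2 := ciSup_le fun i => by
    rw [inner_neg_right, real_inner_comm]
    linarith [hv i]
  refine le_antisymm ((ciInf_le ⟨_, Set.forall_mem_range.2 hlow⟩ (-v)).trans ?_) (le_ciInf hlow)
  rw [norm_neg]
  linarith

end Simplex

theorem stmt_5 {n m : ℕ} (hm : 0 < m) (g : Fin m → EuclideanSpace ℝ (Fin n)) :
    (⨅ d : EuclideanSpace ℝ (Fin n), phi g d) =
      -(1 / 2) * ⨅ lam : stdSimplex ℝ (Fin m), ‖∑ i, (lam : Fin m → ℝ) i • g i‖ ^ 2 := by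
  have : Nonempty (Fin m) := Fin.pos_iff_nonempty.1 hm
  obtain ⟨μ, hμ, hv, hmin⟩ := exists_mem_stdSimplex_isMinOn_norm_sq g
  exact (iInf_iSup_inner_add_norm_sq_div_two g hμ hv).trans (congrArg _ (hmin.iInf_eq hμ).symm)
end

section
/- Let g_1, …, g_m be vectors in ℝⁿ and let λ* ∈ Δ_m be a minimizer of λ ↦ ‖Σ_{i=1}^m λ_i g_i‖ over Δ_m. Then d* = −Σ_{i=1}^m λ*_i g_i is the unique minimizer of d ↦ max_{1≤i≤m} ⟨g_i, d⟩ + (1/2)‖d‖² over ℝⁿ. -/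
/-!
Write `G = ∑ λ*_i g_i`. Since `G` is the point of least norm in the convex hull of the `g_i`,
the variational inequality for that projection gives `‖G‖² ≤ ⟪G, g_i⟫` for every `i`, hence
`φ(-G) ≤ -‖G‖²/2`. Conversely `max_i ⟪g_i, d⟫ ≥ ⟪G, d⟫` because `G` is a convex combination,
so `φ(d) ≥ ⟪G, d⟫ + ‖d‖²/2 = ‖d + G‖²/2 - ‖G‖²/2`. Comparing the two bounds shows that `-G`
minimizes `φ` and that any minimizer `d` has `‖d + G‖ = 0`.
-/

open scoped RealInnerProductSpace

open Finset

section

variable {ι : Type*} [Fintype ι]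

lemma nonempty_of_mem_stdSimplex {lam : ι → ℝ} (hlam : lam ∈ stdSimplex ℝ ι) : Nonempty ι :=
  univ_nonempty_iff.mp <| nonempty_of_sum_ne_zero <| hlam.2.symm ▸ one_ne_zero

lemma sum_mul_le_ciSup_of_mem_stdSimplex {lam : ι → ℝ} (hlam : lam ∈ stdSimplex ℝ ι)
    (f : ι → ℝ) : ∑ i, lam i * f i ≤ ⨆ i, f i :=
  calc ∑ i, lam i * f i ≤ ∑ i, lam i * ⨆ j, f j := by
        gcongr with i
        · exact hlam.1 i
        · exact le_ciSup (Set.finite_range f).bddAbove i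
    _ = ⨆ j, f j := by rw [← sum_mul, hlam.2, one_mul]

end

section

variable {E : Type*} [NormedAddCommGroup E] [InnerProductSpace ℝ E]

lemma norm_sq_le_inner_of_isMinOn_norm {K : Set E} (hK : Convex ℝ K) {v : E} (hv : v ∈ K)
    (hmin : IsMinOn (‖·‖) K v) {w : E} (hw : w ∈ K) : ‖v‖ ^ 2 ≤ ⟪v, w⟫ := by
  have hinf : ‖0 - v‖ = ⨅ w : K, ‖0 - (w : E)‖ := by
    have : Nonempty K := ⟨⟨v, hv⟩⟩
    have hbdd : BddBelow (Set.range fun w : K => ‖0 - (w : E)‖) := by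
      refine ⟨0, ?_⟩
      rintro _ ⟨w, rfl⟩
      exact norm_nonneg _
    refine le_antisymm (le_ciInf fun w => ?_) (ciInf_le hbdd ⟨v, hv⟩)
    simpa using isMinOn_iff.mp hmin w w.2
  have := (norm_eq_iInf_iff_real_inner_le_zero hK hv).mp hinf w hw
  rw [zero_sub, inner_neg_left, inner_sub_right, real_inner_self_eq_norm_sq] at this
  linarith

variable {ι : Type*} [Fintype ι]

lemma norm_sq_le_inner_of_isMinOn_stdSimplex (g : ι → E) {lam : ι → ℝ}
    (hlam : lam ∈ stdSimplex ℝ ι)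
    (hmin : ∀ mu ∈ stdSimplex ℝ ι, ‖∑ i, lam i • g i‖ ≤ ‖∑ i, mu i • g i‖) (i : ι) :
    ‖∑ j, lam j • g j‖ ^ 2 ≤ ⟪∑ j, lam j • g j, g i⟫ := by
  classical
  simp_rw [← Fintype.linearCombination_apply ℝ] at hmin ⊢
  refine norm_sq_le_inner_of_isMinOn_norm ((convex_stdSimplex ℝ ι).linear_image _)
    (Set.mem_image_of_mem _ hlam) ?_ ⟨Pi.single i 1, single_mem_stdSimplex ℝ i, by simp⟩
  rintro _ ⟨mu, hmu, rfl⟩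
  exact hmin mu hmu

end

variable {n m : ℕ} (g : Fin m → EuclideanSpace ℝ (Fin n))

lemma phi_neg_le [Nonempty (Fin m)] (G : EuclideanSpace ℝ (Fin n))
    (hG : ∀ i, ‖G‖ ^ 2 ≤ ⟪G, g i⟫) : phi g (-G) ≤ -‖G‖ ^ 2 / 2 := by
  have : (⨆ i, ⟪g i, -G⟫) ≤ -‖G‖ ^ 2 := ciSup_le fun i => by
    rw [inner_neg_right, real_inner_comm]
    linarith [hG i]
  rw [phi, norm_neg]
  linarith

lemma le_phi_of_mem_stdSimplex {lam : Fin m → ℝ} (hlam : lam ∈ stdSimplex ℝ (Fin m))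
    (d : EuclideanSpace ℝ (Fin n)) :
    ‖d + ∑ i, lam i • g i‖ ^ 2 / 2 - ‖∑ i, lam i • g i‖ ^ 2 / 2 ≤ phi g d := by
  have : ⟪∑ i, lam i • g i, d⟫ ≤ ⨆ i, ⟪g i, d⟫ := by
    simpa only [sum_inner, real_inner_smul_left] using
      sum_mul_le_ciSup_of_mem_stdSimplex hlam fun i => ⟪g i, d⟫
  rw [phi, norm_add_sq_real, real_inner_comm]
  linarith

theorem stmt_6_general {n m : ℕ} (g : Fin m → EuclideanSpace ℝ (Fin n))
    (lam : Fin m → ℝ) (hlam : lam ∈ stdSimplex ℝ (Fin m))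
    (hmin : ∀ mu ∈ stdSimplex ℝ (Fin m), ‖∑ i, lam i • g i‖ ≤ ‖∑ i, mu i • g i‖) :
    (∀ d' : EuclideanSpace ℝ (Fin n), phi g (-∑ i, lam i • g i) ≤ phi g d') ∧
      (∀ d : EuclideanSpace ℝ (Fin n),
        (∀ d' : EuclideanSpace ℝ (Fin n), phi g d ≤ phi g d') → d = -∑ i, lam i • g i) := by
  have := nonempty_of_mem_stdSimplex hlam
  set G := ∑ i, lam i • g i
  have hupper : phi g (-G) ≤ -‖G‖ ^ 2 / 2 :=
    phi_neg_le g G (norm_sq_le_inner_of_isMinOn_stdSimplex g hlam hmin)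
  refine ⟨fun d' => ?_, fun d hd => ?_⟩
  · linarith [le_phi_of_mem_stdSimplex g hlam d', sq_nonneg ‖d' + G‖]
  · have : ‖d + G‖ ^ 2 ≤ 0 := by linarith [le_phi_of_mem_stdSimplex g hlam d, hd (-G)]
    rw [eq_neg_iff_add_eq_zero, ← norm_eq_zero]
    nlinarith [norm_nonneg (d + G)]

theorem stmt_6 {n m : ℕ} (hm : 0 < m) (g : Fin m → EuclideanSpace ℝ (Fin n))
    (lam : Fin m → ℝ) (hlam : lam ∈ stdSimplex ℝ (Fin m))
    (hmin : ∀ mu ∈ stdSimplex ℝ (Fin m), ‖∑ i, lam i • g i‖ ≤ ‖∑ i, mu i • g i‖) :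
    (∀ d' : EuclideanSpace ℝ (Fin n), phi g (-∑ i, lam i • g i) ≤ phi g d') ∧
      (∀ d : EuclideanSpace ℝ (Fin n),
        (∀ d' : EuclideanSpace ℝ (Fin n), phi g d ≤ phi g d') → d = -∑ i, lam i • g i) :=
  stmt_6_general g lam hlam hmin
end

section
/- Let g_1, …, g_m be vectors in ℝⁿ and let d* be the unique minimizer of d ↦ max_{1≤i≤m} ⟨g_i, d⟩ + (1/2)‖d‖² over ℝⁿ. Then ⟨g_i, d*⟩ ≤ −‖d*‖² for every i ∈ {1,…,m}. -/
open scoped RealInnerProductSpace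

/-!
Along the ray `s ↦ s • d*` with `s > 0`, `φ` is the quadratic `s M + s² ‖d*‖² / 2`, where
`M = max_i ⟨g_i, d*⟩`. Since `d*` minimizes `φ`, this quadratic has a local minimum at the
interior point `s = 1`, so its derivative `M + ‖d*‖²` vanishes there.
-/

open Filter Topology

theorem phi_smul_of_nonneg {n m : ℕ} (g : Fin m → EuclideanSpace ℝ (Fin n))
    (d : EuclideanSpace ℝ (Fin n)) {c : ℝ} (hc : 0 ≤ c) :
    phi g (c • d) = c * (⨆ i, ⟪g i, d⟫) + c ^ 2 * (‖d‖ ^ 2 / 2) := by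
  simp only [phi, real_inner_smul_right, Real.mul_iSup_of_nonneg hc, norm_smul,
    Real.norm_of_nonneg hc]
  ring

theorem iSup_inner_eq_neg_norm_sq_of_isLocalMin {n m : ℕ}
    (g : Fin m → EuclideanSpace ℝ (Fin n)) {d : EuclideanSpace ℝ (Fin n)}
    (hd : IsLocalMin (phi g) d) :
    ⨆ i, ⟪g i, d⟫ = -‖d‖ ^ 2 := by
  set M := ⨆ i, ⟪g i, d⟫
  have hray : IsLocalMin (fun s : ℝ => phi g (s • d)) 1 := by
    refine IsLocalMin.comp_continuous (f := phi g) (g := fun s : ℝ => s • d) (b := 1) ?_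
      (by fun_prop)
    rwa [one_smul]
  have hquad : IsLocalMin (fun s : ℝ => s * M + s ^ 2 * (‖d‖ ^ 2 / 2)) 1 := by
    refine hray.congr ?_
    filter_upwards [Ioi_mem_nhds one_pos] with s hs
    exact phi_smul_of_nonneg g d hs.le
  have hderiv := ((hasDerivAt_id' (1 : ℝ)).mul_const M).add
    ((hasDerivAt_pow 2 (1 : ℝ)).mul_const (‖d‖ ^ 2 / 2))
  have hcrit := hquad.hasDerivAt_eq_zero hderiv
  norm_num at hcrit
  linarith

theorem stmt_7_general {n m : ℕ} (g : Fin m → EuclideanSpace ℝ (Fin n))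
    (dstar : EuclideanSpace ℝ (Fin n))
    (hdstar : ∀ d' : EuclideanSpace ℝ (Fin n), phi g dstar ≤ phi g d') :
    ∀ i, ⟪g i, dstar⟫ ≤ -‖dstar‖ ^ 2 := by
  intro i
  rw [← iSup_inner_eq_neg_norm_sq_of_isLocalMin g (Eventually.of_forall (f := 𝓝 dstar) hdstar)]
  exact le_ciSup (Set.finite_range fun j => ⟪g j, dstar⟫).bddAbove i

theorem stmt_7 {n m : ℕ} (hm : 0 < m) (g : Fin m → EuclideanSpace ℝ (Fin n))
    (dstar : EuclideanSpace ℝ (Fin n))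
    (hdstar : ∀ d' : EuclideanSpace ℝ (Fin n), phi g dstar ≤ phi g d') :
    ∀ i, ⟪g i, dstar⟫ ≤ -‖dstar‖ ^ 2 :=
  stmt_7_general g dstar hdstar
end

section
/- Let F : ℝⁿ → ℝᵐ be continuously differentiable and let L > 0. Suppose (x^k) is a sequence in ℝⁿ converging to x*, and for each k there are weights α^k_1,…,α^k_m ∈ (0, L] such that d^k is the Barzilai–Borwein descent direction at x^k for the weights α^k_1,…,α^k_m. If d^k → 0, then x* is Pareto critical. -/
open scoped RealInnerProductSpace

/-! If `⟪∇F_i(x*), v⟫ < 0` for all `i`, then for large `k` there is `c > 0` with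
`⟪∇F_i(x^k), v⟫ ≤ -c` for all `i`. Put `g_i = α_i⁻¹ ∇F_i(x^k)` and let `j` index the largest
weight, so that `⟪g_i, v⟫ ≤ -c / α_j` for every `i`. At the minimizer,
`φ(d^k) ≥ ⟪g_j, d^k⟫ ≥ -‖g_j‖ ‖d^k‖`, while `φ(t v) ≤ -c² / (2 α_j² ‖v‖²)` for the best `t`.
The powers of `α_j` cancel up to `α_j ≤ L`, leaving
`c² ≤ 2 L ‖v‖² maxᵢ ‖∇F_i(x^k)‖ ‖d^k‖`, which contradicts `d^k → 0`. -/

open Filter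

theorem ContDiff.continuous_gradient {E : Type*} [NormedAddCommGroup E] [InnerProductSpace ℝ E]
    [CompleteSpace E] {f : E → ℝ} (hf : ContDiff ℝ 1 f) : Continuous (gradient f) :=
  (InnerProductSpace.toDual ℝ E).symm.continuous.comp (hf.continuous_fderiv one_ne_zero)

namespace phi

variable {n m : ℕ}

theorem neg_norm_mul_norm_le (g : Fin m → EuclideanSpace ℝ (Fin n)) (j : Fin m)
    (d : EuclideanSpace ℝ (Fin n)) : -(‖g j‖ * ‖d‖) ≤ phi g d := by
  have hj : ⟪g j, d⟫ ≤ ⨆ i, ⟪g i, d⟫ :=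
    le_ciSup (f := fun i => ⟪g i, d⟫) (Set.finite_range _).bddAbove j
  have := neg_le_of_abs_le (abs_real_inner_le_norm (g j) d)
  unfold phi
  nlinarith [sq_nonneg ‖d‖]

theorem smul_le [Nonempty (Fin m)] {g : Fin m → EuclideanSpace ℝ (Fin n)}
    {v : EuclideanSpace ℝ (Fin n)} {c t : ℝ} (hv : ∀ i, ⟪g i, v⟫ ≤ -c) (ht : 0 ≤ t) :
    phi g (t • v) ≤ -(t * c) + t ^ 2 * ‖v‖ ^ 2 / 2 := by
  have hsup : (⨆ i, ⟪g i, t • v⟫) ≤ -(t * c) := ciSup_le fun i => by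
    rw [real_inner_smul_right]
    nlinarith [hv i]
  rw [phi, norm_smul, mul_pow, Real.norm_eq_abs, sq_abs]
  linarith

theorem sq_le_of_isMin {g : Fin m → EuclideanSpace ℝ (Fin n)} {d v : EuclideanSpace ℝ (Fin n)}
    {c : ℝ} (hd : ∀ d', phi g d ≤ phi g d') (hc : 0 ≤ c) (hv : ∀ i, ⟪g i, v⟫ ≤ -c)
    (j : Fin m) : c ^ 2 ≤ 2 * ‖v‖ ^ 2 * ‖g j‖ * ‖d‖ := by
  have : Nonempty (Fin m) := ⟨j⟩
  rcases eq_or_ne v 0 with rfl | hv0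
  · have : c = 0 := le_antisymm (by simpa using hv j) hc
    simp [this]
  have hvpos : 0 < ‖v‖ ^ 2 := by positivity
  have key : -(‖g j‖ * ‖d‖) ≤ -(c / ‖v‖ ^ 2 * c) + (c / ‖v‖ ^ 2) ^ 2 * ‖v‖ ^ 2 / 2 :=
    (neg_norm_mul_norm_le g j d).trans ((hd _).trans (smul_le hv (div_nonneg hc hvpos.le)))
  field_simp at key
  nlinarith

theorem sq_le_of_isMin_inv_smul [Nonempty (Fin m)] {u : Fin m → EuclideanSpace ℝ (Fin n)}
    {α : Fin m → ℝ} {L c : ℝ} {d v : EuclideanSpace ℝ (Fin n)} (hα : ∀ i, 0 < α i ∧ α i ≤ L)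
    (hd : ∀ d', phi (fun i => (α i)⁻¹ • u i) d ≤ phi (fun i => (α i)⁻¹ • u i) d')
    (hc : 0 ≤ c) (hv : ∀ i, ⟪u i, v⟫ ≤ -c) :
    c ^ 2 ≤ 2 * L * ‖v‖ ^ 2 * ‖u‖ * ‖d‖ := by
  obtain ⟨j, hj⟩ := Finite.exists_max α
  set a := (α j)⁻¹
  have ha : 0 < a := inv_pos.2 (hα j).1
  have haL : L⁻¹ ≤ a := inv_anti₀ (hα j).1 (hα j).2
  have hv' : ∀ i, ⟪(α i)⁻¹ • u i, v⟫ ≤ -(a * c) := fun i => by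
    have : a ≤ (α i)⁻¹ := inv_anti₀ (hα i).1 (hj i)
    rw [real_inner_smul_left]
    nlinarith [hv i]
  have key := sq_le_of_isMin hd (by positivity) hv' j
  rw [norm_smul, Real.norm_of_nonneg ha.le] at key
  have hac : a * c ^ 2 ≤ 2 * ‖v‖ ^ 2 * ‖u‖ * ‖d‖ := by
    refine le_of_mul_le_mul_left ?_ ha
    have huj : ‖u j‖ ≤ ‖u‖ := norm_le_pi_norm u j
    calc a * (a * c ^ 2) = (a * c) ^ 2 := by ring
      _ ≤ 2 * ‖v‖ ^ 2 * (a * ‖u j‖) * ‖d‖ := key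
      _ = a * (2 * ‖v‖ ^ 2 * ‖u j‖ * ‖d‖) := by ring
      _ ≤ a * (2 * ‖v‖ ^ 2 * ‖u‖ * ‖d‖) := by gcongr
  have hL : 0 < L := (hα j).1.trans_le (hα j).2
  calc c ^ 2 = L * (L⁻¹ * c ^ 2) := by field_simp
    _ ≤ L * (a * c ^ 2) := by gcongr
    _ ≤ 2 * L * ‖v‖ ^ 2 * ‖u‖ * ‖d‖ := by nlinarith

end phi

theorem stmt_15_general {n m : ℕ} (hm : 0 < m) (F : Fin m → EuclideanSpace ℝ (Fin n) → ℝ)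
    (hF : ∀ i, ContDiff ℝ 1 (F i)) (L : ℝ)
    (x : ℕ → EuclideanSpace ℝ (Fin n)) (xstar : EuclideanSpace ℝ (Fin n))
    (hx : Filter.Tendsto x Filter.atTop (nhds xstar))
    (α : ℕ → Fin m → ℝ) (hα : ∀ k i, 0 < α k i ∧ α k i ≤ L)
    (d : ℕ → EuclideanSpace ℝ (Fin n))
    (hd : ∀ k, ∀ d' : EuclideanSpace ℝ (Fin n),
      phi (fun i => (α k i)⁻¹ • gradient (F i) (x k)) (d k) ≤
        phi (fun i => (α k i)⁻¹ • gradient (F i) (x k)) d')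
    (hd0 : Filter.Tendsto d Filter.atTop (nhds 0)) :
    ParetoCritical F xstar := by
  rintro ⟨v, hv⟩
  have : NeZero m := ⟨hm.ne'⟩
  let u : EuclideanSpace ℝ (Fin n) → Fin m → EuclideanSpace ℝ (Fin n) :=
    fun y i => gradient (F i) y
  let c : EuclideanSpace ℝ (Fin n) → ℝ :=
    fun y => Finset.univ.inf' Finset.univ_nonempty fun i => -⟪u y i, v⟫
  have hu : Continuous u := continuous_pi fun i => (hF i).continuous_gradient
  have hc : Continuous c := Continuous.finset_inf'_apply _ fun i _ =>
    ((continuous_apply i).comp hu).inner continuous_const |>.neg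
  have hcpos : 0 < c xstar := (Finset.lt_inf'_iff _).2 fun i _ => neg_pos.2 (hv i)
  have hbound : ∀ᶠ k in atTop, c (x k) ^ 2 ≤ 2 * L * ‖v‖ ^ 2 * ‖u (x k)‖ * ‖d k‖ :=
    ((hc.tendsto xstar).comp hx |>.eventually (lt_mem_nhds hcpos)).mono fun k hk =>
      phi.sq_le_of_isMin_inv_smul (hα k) (hd k) hk.le fun i =>
        le_neg_of_le_neg (Finset.inf'_le _ (Finset.mem_univ i))
  have hlim := le_of_tendsto_of_tendsto
    ((hc.tendsto xstar).comp hx |>.pow 2)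
    (tendsto_const_nhds.mul ((hu.tendsto xstar).comp hx).norm |>.mul hd0.norm) hbound
  rw [norm_zero, mul_zero] at hlim
  exact (pow_pos hcpos 2).not_ge hlim

theorem stmt_15 {n m : ℕ} (hm : 0 < m) (F : Fin m → EuclideanSpace ℝ (Fin n) → ℝ)
    (hF : ∀ i, ContDiff ℝ 1 (F i)) (L : ℝ) (hL : 0 < L)
    (x : ℕ → EuclideanSpace ℝ (Fin n)) (xstar : EuclideanSpace ℝ (Fin n))
    (hx : Filter.Tendsto x Filter.atTop (nhds xstar))
    (α : ℕ → Fin m → ℝ) (hα : ∀ k i, 0 < α k i ∧ α k i ≤ L)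
    (d : ℕ → EuclideanSpace ℝ (Fin n))
    (hd : ∀ k, ∀ d' : EuclideanSpace ℝ (Fin n),
      phi (fun i => (α k i)⁻¹ • gradient (F i) (x k)) (d k) ≤
        phi (fun i => (α k i)⁻¹ • gradient (F i) (x k)) d')
    (hd0 : Filter.Tendsto d Filter.atTop (nhds 0)) :
    ParetoCritical F xstar :=
  stmt_15_general hm F hF L x xstar hx α hα d hd hd0
end

section
/- Let g_1, …, g_m be vectors in ℝⁿ with m ≥ 2, and for k > 0 define N(k) = min_{λ∈Δ_m} ‖Σ_{i=1}^{m−1} λ_i g_i + λ_m · k · g_m‖ and t_k = −N(k)². If 0 < k₁ ≤ k₂, then N(k₁) ≤ N(k₂) and t_{k₁} ≥ t_{k₂}. -/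
/-!
Scaling the vertices `v i` by factors `c i ≥ 1` can only move the convex hull away from the
origin: a point `∑ λᵢ cᵢ vᵢ` of the new hull is `s` times the point `∑ (λᵢ cᵢ / s) vᵢ` of the
old one, where `s = ∑ λᵢ cᵢ ≥ 1`. For `N` take `c = k₂ / k₁` on the last vertex and `1` elsewhere.
-/

open scoped RealInnerProductSpace

/-- `N(k)`: the minimal Euclidean norm over the convex hull of `{g_1, …, g_{m-1}, k • g_m}`,
i.e. `min_{λ ∈ Δ_m} ‖∑_{i=1}^{m-1} λ_i g_i + λ_m k g_m‖`. -/
noncomputable def Nval {n m : ℕ} (g : Fin m → EuclideanSpace ℝ (Fin n)) (k : ℝ) : ℝ :=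
  ⨅ lam : stdSimplex ℝ (Fin m),
    ‖∑ i, (lam : Fin m → ℝ) i • (if (i : ℕ) + 1 = m then k • g i else g i)‖

theorem inv_sum_smul_mem_stdSimplex {ι : Type*} [Fintype ι] {w : ι → ℝ} (hw : ∀ i, 0 ≤ w i)
    (hsum : 0 < ∑ i, w i) : (∑ i, w i)⁻¹ • w ∈ stdSimplex ℝ ι :=
  ⟨fun i => mul_nonneg (inv_nonneg.2 hsum.le) (hw i), by
    simp only [Pi.smul_apply, smul_eq_mul, ← Finset.mul_sum, inv_mul_cancel₀ hsum.ne']⟩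

section MinNormOnSimplex

variable {ι E : Type*} [Fintype ι] [SeminormedAddCommGroup E] [NormedSpace ℝ E]

noncomputable def minNormOnSimplex (v : ι → E) : ℝ :=
  ⨅ lam : stdSimplex ℝ ι, ‖∑ i, (lam : ι → ℝ) i • v i‖

theorem minNormOnSimplex_nonneg (v : ι → E) : 0 ≤ minNormOnSimplex v :=
  Real.iInf_nonneg fun _ => norm_nonneg _

theorem minNormOnSimplex_le (v : ι → E) {lam : ι → ℝ} (hlam : lam ∈ stdSimplex ℝ ι) :
    minNormOnSimplex v ≤ ‖∑ i, lam i • v i‖ :=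
  ciInf_le ⟨0, by rintro _ ⟨_, rfl⟩; exact norm_nonneg _⟩ (⟨lam, hlam⟩ : stdSimplex ℝ ι)

theorem minNormOnSimplex_le_smul (v : ι → E) {c : ι → ℝ} (hc : ∀ i, 1 ≤ c i) :
    minNormOnSimplex v ≤ minNormOnSimplex fun i => c i • v i := by
  classical
  rcases isEmpty_or_nonempty ι with _ | ⟨⟨i₀⟩⟩
  · simp [minNormOnSimplex]
  have : Nonempty (stdSimplex ℝ ι) := ⟨⟨_, single_mem_stdSimplex ℝ i₀⟩⟩
  refine le_ciInf fun ⟨lam, hlam0, hlam1⟩ => ?_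
  set s := ∑ i, c i * lam i
  have hs : 1 ≤ s := hlam1 ▸ Finset.sum_le_sum fun i _ => le_mul_of_one_le_left (hlam0 i) (hc i)
  have hmem := inv_sum_smul_mem_stdSimplex (w := fun i => c i * lam i)
    (fun i => mul_nonneg (zero_le_one.trans (hc i)) (hlam0 i)) (by positivity)
  calc minNormOnSimplex v ≤ ‖∑ i, (s⁻¹ • fun i => c i * lam i) i • v i‖ :=
        minNormOnSimplex_le v hmem
    _ = s⁻¹ * ‖∑ i, lam i • c i • v i‖ := by
        simp only [Pi.smul_apply, smul_eq_mul, ← smul_smul, ← Finset.smul_sum,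
          norm_smul, Real.norm_eq_abs, abs_of_pos (inv_pos.2 (zero_lt_one.trans_le hs))]
        simp only [smul_smul, mul_comm]
    _ ≤ ‖∑ i, lam i • c i • v i‖ :=
        mul_le_of_le_one_left (norm_nonneg _) (inv_le_one_of_one_le₀ hs)

end MinNormOnSimplex

theorem stmt_16_general {n m : ℕ} (g : Fin m → EuclideanSpace ℝ (Fin n))
    (k₁ k₂ : ℝ) (hk₁ : 0 < k₁) (hk : k₁ ≤ k₂) :
    Nval g k₁ ≤ Nval g k₂ ∧ -(Nval g k₁) ^ 2 ≥ -(Nval g k₂) ^ 2 := by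
  have hN : Nval g k₁ ≤ Nval g k₂ := by
    refine (minNormOnSimplex_le_smul (fun i : Fin m => if (i : ℕ) + 1 = m then k₁ • g i else g i)
      (c := fun i : Fin m => if (i : ℕ) + 1 = m then k₂ / k₁ else 1) fun i => ?_).trans_eq ?_
    · split_ifs
      exacts [(one_le_div hk₁).2 hk, le_rfl]
    · show minNormOnSimplex _ = minNormOnSimplex _
      congr 1 with i
      split_ifs
      exacts [by rw [smul_smul, div_mul_cancel₀ _ hk₁.ne'], one_smul ℝ _]
  exact ⟨hN, neg_le_neg (pow_le_pow_left₀ (minNormOnSimplex_nonneg _) hN 2)⟩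

theorem stmt_16 {n m : ℕ} (hm : 2 ≤ m) (g : Fin m → EuclideanSpace ℝ (Fin n))
    (k₁ k₂ : ℝ) (hk₁ : 0 < k₁) (hk : k₁ ≤ k₂) :
    Nval g k₁ ≤ Nval g k₂ ∧ -(Nval g k₁) ^ 2 ≥ -(Nval g k₂) ^ 2 :=
  stmt_16_general g k₁ k₂ hk₁ hk
end
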